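/- Let V be a nonempty vertical path with u North steps and d South steps whose final step is S, and let H be a horizontal path with r East steps and l West steps. For every natural number k, the number of shuffles of V and H whose In-Vert equals k is C(r+u, u+d−k) · C(l+d, k), where C(a,b) denotes the binomial coefficient, taken to be 0 unless 0 ≤ b ≤ a. -/

import Mathlib

inductive Step : Type
  | E | W | N | S
deriving DecidableEq, Repr

open Step

/-- A step is vertical (North or South). -/
def isVert : Step → Bool
  | N => true
  | S => true
  | _ => false

/-- A step is horizontal (East or West). -/
def isHoriz : Step → Bool
  | E => true
  | W => true
  | _ => false

/-- `σ` is a shuffle (interleaving) of the vertical path `V` and horizontal path `H`: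
its subsequence of vertical steps is `V` and its subsequence of horizontal steps is `H`. -/
def IsShuffle (V H σ : List Step) : Prop :=
  σ.filter isVert = V ∧ σ.filter isHoriz = H

/-- The list of adjacent pairs `(σ_i, σ_{i+1})` of a list. -/
def pairs (σ : List Step) : List (Step × Step) := σ.zip σ.tail

/-- Signed peak-count: (# of (N,W) adjacent pairs) − (# of (E,S) adjacent pairs). -/
def signedPeak (σ : List Step) : ℤ :=
  (((pairs σ).filter (fun p => decide (p.1 = N ∧ p.2 = W))).length : ℤ)
  - (((pairs σ).filter (fun p => decide (p.1 = E ∧ p.2 = S))).length : ℤ)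

/-- Peak-count: (# of (N,W) adjacent pairs) + (# of (E,S) adjacent pairs). -/
def peakCount (σ : List Step) : ℕ :=
  ((pairs σ).filter (fun p => decide (p.1 = N ∧ p.2 = W))).length
  + ((pairs σ).filter (fun p => decide (p.1 = E ∧ p.2 = S))).length

/-- Binomial coefficient with integer arguments, equal to 0 unless `0 ≤ b ≤ a`. -/
def zch (a b : ℤ) : ℕ := if 0 ≤ b ∧ b ≤ a then a.toNat.choose b.toNat else 0

/-- In-Vert of `σ`: the number of indices `j ≥ 1` such that `σ_j` is vertical and either
`j = 1` or `σ_{j−1}` is an inward step (inward steps are `{W, S}`).  This corresponds to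
viewing `σ` as preceded by a virtual zeroth inward step and counting occurrences of an
inward step immediately followed by a vertical step. -/
def invert (σ : List Step) : ℕ :=
  (if σ.head? = some Step.N ∨ σ.head? = some Step.S then 1 else 0)
  + ((pairs σ).filter (fun p => decide ((p.1 = Step.W ∨ p.1 = Step.S) ∧ (p.2 = Step.N ∨ p.2 = Step.S)))).length

/-
Put a virtual inward step in front of a shuffle `σ`. The step before each vertical step of `σ`
is then a slot: the virtual step, or a step of `σ` other than the last vertical one. Of the
slots, `l + d` are inward (`W`, `S` except the last one, the virtual step) and `r + u` are
outward (`E`, `N`). A shuffle corresponds to the set of `u + d` slots followed by a vertical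
step, and its In-Vert is the number of inward slots in that set. The proof peels off the first
step of `σ`: the vertical-first and horizontal-first cases add up by Pascal's rule, in the
number of inward slots if the step in front is inward and of outward slots otherwise.
-/

lemma isHoriz_eq_not_isVert (s : Step) : isHoriz s = !isVert s := by
  cases s <;> rfl

def inward : Step → Bool
  | W => true
  | S => true
  | _ => false

/-- The In-Vert of `σ` preceded by a virtual step that is inward iff `b`. -/
def invertFrom : Bool → List Step → ℕ
  | _, [] => 0
  | b, x :: σ => (b && isVert x).toNat + invertFrom (inward x) σ

lemma invertFrom_inward_eq_pairs (x : Step) (σ : List Step) :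
    invertFrom (inward x) σ = ((pairs (x :: σ)).filter
      (fun p => decide ((p.1 = W ∨ p.1 = S) ∧ (p.2 = N ∨ p.2 = S)))).length := by
  induction σ generalizing x with
  | nil => simp [invertFrom, pairs]
  | cons y σ ih =>
    rw [show pairs (x :: y :: σ) = (x, y) :: pairs (y :: σ) from rfl, List.filter_cons,
      invertFrom, ih y]
    cases x <;> cases y <;> simp [inward, isVert] <;> omega

lemma invert_eq_invertFrom (σ : List Step) : invert σ = invertFrom true σ := by
  cases σ with
  | nil => rfl
  | cons x σ =>
    rw [invert, ← invertFrom_inward_eq_pairs, invertFrom]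
    cases x <;> simp [isVert]

lemma invertFrom_of_isHoriz (b : Bool) {H : List Step} (hH : ∀ s ∈ H, isHoriz s) :
    invertFrom b H = 0 := by
  induction H generalizing b with
  | nil => rfl
  | cons h H ih =>
    have hh : isVert h = false := by simpa [isHoriz_eq_not_isVert] using hH h (by simp)
    simp [invertFrom, hh, ih _ fun s hs => hH s (by simp [hs])]

lemma zch_natCast_natCast (a m : ℕ) : zch a m = a.choose m := by
  unfold zch
  split_ifs with h
  · simp
  · rw [Nat.choose_eq_zero_of_lt (by omega)]

lemma zch_of_neg (a : ℤ) {b : ℤ} (hb : b < 0) : zch a b = 0 := if_neg (by omega)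

lemma zch_succ (a : ℕ) (b : ℤ) : zch (a + 1 : ℕ) b = zch a (b - 1) + zch a b := by
  rcases lt_trichotomy b 0 with hb | rfl | hb
  · simp [zch_of_neg _ hb, zch_of_neg _ (show b - 1 < 0 by omega)]
  · rw [zch_of_neg _ (show (0 : ℤ) - 1 < 0 by norm_num), zero_add, ← Nat.cast_zero,
      zch_natCast_natCast, zch_natCast_natCast, Nat.choose_zero_right, Nat.choose_zero_right]
  · obtain ⟨m, rfl⟩ : ∃ m : ℕ, b = m + 1 := ⟨(b - 1).toNat, by omega⟩
    rw [add_sub_cancel_right, ← Nat.cast_succ, zch_natCast_natCast, zch_natCast_natCast,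
      zch_natCast_natCast, Nat.choose_succ_succ]

def slotChoose (i o n : ℕ) (k : ℤ) : ℕ := zch o (n - k) * zch i k

lemma slotChoose_zero (i o : ℕ) (k : ℤ) : slotChoose i o 0 k = if k = 0 then 1 else 0 := by
  unfold slotChoose zch
  split_ifs <;> first | omega | simp_all

lemma slotChoose_eq_zero {i o n : ℕ} (h : i + o < n) (k : ℤ) : slotChoose i o n k = 0 := by
  unfold slotChoose zch
  split_ifs <;> omega

lemma slotChoose_succ (b : Bool) (i o n : ℕ) (k : ℤ) :
    slotChoose (i + b.toNat) (o + (!b).toNat) (n + 1) k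
      = slotChoose i o n (k - b.toNat) + slotChoose i o (n + 1) k := by
  cases b
  · simp only [slotChoose, Bool.toNat_false, Bool.not_false, Bool.toNat_true, add_zero,
      Nat.cast_zero, sub_zero]
    rw [zch_succ, add_mul]
    congr 3
    push_cast; ring
  · simp only [slotChoose, Bool.toNat_true, Bool.not_true, Bool.toNat_false, add_zero,
      Nat.cast_one]
    rw [zch_succ, mul_add]
    congr 3
    push_cast; ring

lemma isShuffle_nil_left_iff {H σ : List Step} (hH : ∀ s ∈ H, isHoriz s) :
    IsShuffle [] H σ ↔ σ = H := by
  unfold IsShuffle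
  constructor
  · rintro ⟨hv, rfl⟩
    refine (List.filter_eq_self.2 fun s hs => ?_).symm
    simpa [isHoriz_eq_not_isVert] using List.filter_eq_nil_iff.1 hv s hs
  · rintro rfl
    refine ⟨List.filter_eq_nil_iff.2 fun s hs => ?_, List.filter_eq_self.2 hH⟩
    simpa [isHoriz_eq_not_isVert] using hH s hs

lemma isShuffle_cons_iff {V H σ : List Step} {x : Step} :
    IsShuffle V H (x :: σ) ↔ (isVert x ∧ ∃ V', V = x :: V' ∧ IsShuffle V' H σ) ∨
      (isHoriz x ∧ ∃ H', H = x :: H' ∧ IsShuffle V H' σ) := by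
  cases x <;> simp [IsShuffle, List.filter_cons, isVert, isHoriz, eq_comm, and_comm]

section ShuffleRecursion

variable {v h : Step} {V H : List Step} (p : List Step → Prop)

lemma setOf_isShuffle_cons_nil_eq_image (hv : isVert v) :
    {σ | IsShuffle (v :: V) [] σ ∧ p σ} =
      (v :: ·) '' {σ | IsShuffle V [] σ ∧ p (v :: σ)} := by
  ext (_ | ⟨x, τ⟩)
  · simp [IsShuffle]
  · simp only [Set.mem_ofPred_eq, Set.mem_image, isShuffle_cons_iff, List.cons.injEq]
    aesop

lemma setOf_isShuffle_cons_cons_eq_union (hv : isVert v) (hh : isHoriz h) :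
    {σ | IsShuffle (v :: V) (h :: H) σ ∧ p σ} =
      (v :: ·) '' {σ | IsShuffle V (h :: H) σ ∧ p (v :: σ)} ∪
        (h :: ·) '' {σ | IsShuffle (v :: V) H σ ∧ p (h :: σ)} := by
  ext (_ | ⟨x, τ⟩)
  · simp [IsShuffle]
  · simp only [Set.mem_ofPred_eq, Set.mem_union, Set.mem_image, isShuffle_cons_iff,
      List.cons.injEq]
    aesop

end ShuffleRecursion

section InvertCount

variable {v h : Step} {V H : List Step}

lemma invertFrom_cons_of_isVert (b : Bool) (hv : isVert v) (σ : List Step) :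
    invertFrom b (v :: σ) = b.toNat + invertFrom (inward v) σ := by
  simp [invertFrom, hv]

lemma invertFrom_cons_of_isHoriz (b : Bool) (hh : isHoriz h) (σ : List Step) :
    invertFrom b (h :: σ) = invertFrom (inward h) σ := by
  have hh' : isVert h = false := by simpa [isHoriz_eq_not_isVert] using hh
  simp [invertFrom, hh']

lemma encard_setOf_isShuffle_nil_left (b : Bool) (hH : ∀ s ∈ H, isHoriz s) (k : ℤ) :
    {σ | IsShuffle [] H σ ∧ (invertFrom b σ : ℤ) = k}.encard = if k = 0 then 1 else 0 := by
  have hset :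
      {σ | IsShuffle [] H σ ∧ (invertFrom b σ : ℤ) = k} = {σ | σ = H ∧ k = 0} := by
    ext σ
    simp only [Set.mem_ofPred_eq, isShuffle_nil_left_iff hH]
    constructor <;> rintro ⟨rfl, hk⟩ <;> simp_all [invertFrom_of_isHoriz b hH]
  rw [hset]
  split_ifs with hk <;> simp [hk]

lemma encard_setOf_isShuffle_cons_nil (b : Bool) (hv : isVert v) (k : ℤ) :
    {σ | IsShuffle (v :: V) [] σ ∧ (invertFrom b σ : ℤ) = k}.encard =
      {σ | IsShuffle V [] σ ∧ (invertFrom (inward v) σ : ℤ) = k - b.toNat}.encard := by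
  rw [setOf_isShuffle_cons_nil_eq_image _ hv, List.cons_injective.encard_image]
  simp only [invertFrom_cons_of_isVert b hv, Nat.cast_add, eq_sub_iff_add_eq']

lemma encard_setOf_isShuffle_cons_cons (b : Bool) (hv : isVert v) (hh : isHoriz h) (k : ℤ) :
    {σ | IsShuffle (v :: V) (h :: H) σ ∧ (invertFrom b σ : ℤ) = k}.encard =
      {σ | IsShuffle V (h :: H) σ ∧ (invertFrom (inward v) σ : ℤ) = k - b.toNat}.encard +
        {σ | IsShuffle (v :: V) H σ ∧ (invertFrom (inward h) σ : ℤ) = k}.encard := by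
  have hvh : v ≠ h := by
    rintro rfl
    simp [isHoriz_eq_not_isVert, hv] at hh
  rw [setOf_isShuffle_cons_cons_eq_union _ hv hh, Set.encard_union_eq,
    List.cons_injective.encard_image, List.cons_injective.encard_image]
  · simp only [invertFrom_cons_of_isVert b hv, invertFrom_cons_of_isHoriz b hh, Nat.cast_add,
      eq_sub_iff_add_eq']
  · rw [Set.disjoint_left]
    rintro _ ⟨σ, -, rfl⟩ ⟨τ, -, hτ⟩
    exact hvh (List.cons.inj hτ).1.symm

end InvertCount

/-- The steps that can precede a vertical step: all but the last vertical one. -/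
def slotSteps (V H : List Step) : List Step := V.dropLast ++ H

lemma countP_slotSteps_cons_left (p : Step → Bool) {V : List Step} (hV : V ≠ []) (v : Step)
    (H : List Step) :
    (slotSteps (v :: V) H).countP p = (slotSteps V H).countP p + (p v).toNat := by
  cases hp : p v <;> simp [slotSteps, List.dropLast_cons_of_ne_nil hV, hp]

lemma countP_slotSteps_cons_right (p : Step → Bool) (V : List Step) (h : Step) (H : List Step) :
    (slotSteps V (h :: H)).countP p = (slotSteps V H).countP p + (p h).toNat := by
  cases hp : p h <;> simp [slotSteps, hp, add_assoc]

lemma countP_inward_add_countP_not_inward (l : List Step) :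
    l.countP inward + l.countP (!inward ·) = l.length := by
  rw [List.length_eq_countP_add_countP inward]
  simp

section Counts

variable {V H : List Step}

lemma countP_inward_of_isVert (hV : ∀ s ∈ V, isVert s) : V.countP inward = V.count S :=
  List.countP_congr fun s hs => by have := hV s hs; cases s <;> simp_all [isVert, inward]

lemma countP_not_inward_of_isVert (hV : ∀ s ∈ V, isVert s) :
    V.countP (!inward ·) = V.count N :=
  List.countP_congr fun s hs => by have := hV s hs; cases s <;> simp_all [isVert, inward]

lemma countP_inward_of_isHoriz (hH : ∀ s ∈ H, isHoriz s) : H.countP inward = H.count W :=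
  List.countP_congr fun s hs => by have := hH s hs; cases s <;> simp_all [isHoriz, inward]

lemma countP_not_inward_of_isHoriz (hH : ∀ s ∈ H, isHoriz s) :
    H.countP (!inward ·) = H.count E :=
  List.countP_congr fun s hs => by have := hH s hs; cases s <;> simp_all [isHoriz, inward]

variable (hV : ∀ s ∈ V, isVert s) (hH : ∀ s ∈ H, isHoriz s) (hlast : V.getLast? = some S)
include hV hH hlast

lemma countP_inward_slotSteps_add_one :
    (slotSteps V H).countP inward + 1 = H.count W + V.count S := by
  have hV' : ∀ s ∈ V.dropLast, isVert s := fun s hs => hV s (List.dropLast_subset _ hs)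
  conv_rhs => rw [← List.dropLast_append_getLast? S hlast]
  rw [slotSteps, List.countP_append, List.count_append, countP_inward_of_isVert hV',
    countP_inward_of_isHoriz hH]
  simp
  omega

lemma countP_not_inward_slotSteps :
    (slotSteps V H).countP (!inward ·) = H.count E + V.count N := by
  have hV' : ∀ s ∈ V.dropLast, isVert s := fun s hs => hV s (List.dropLast_subset _ hs)
  conv_rhs => rw [← List.dropLast_append_getLast? S hlast]
  rw [slotSteps, List.countP_append, List.count_append, countP_not_inward_of_isVert hV',
    countP_not_inward_of_isHoriz hH]
  simp [add_comm]

end Counts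

theorem encard_setOf_isShuffle_invertFrom (b : Bool) {V H : List Step}
    (hV : ∀ s ∈ V, isVert s) (hH : ∀ s ∈ H, isHoriz s) (k : ℤ) :
    {σ | IsShuffle V H σ ∧ (invertFrom b σ : ℤ) = k}.encard =
      slotChoose ((slotSteps V H).countP inward + b.toNat)
        ((slotSteps V H).countP (!inward ·) + (!b).toNat) V.length k := by
  induction V generalizing H b k with
  | nil =>
    rw [encard_setOf_isShuffle_nil_left _ hH, List.length_nil, slotChoose_zero]
    split_ifs <;> rfl
  | cons v V ihV =>
    have hv := hV v List.mem_cons_self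
    have vertical : ∀ {H : List Step}, (∀ s ∈ H, isHoriz s) → ∀ k : ℤ,
        {σ | IsShuffle V H σ ∧ (invertFrom (inward v) σ : ℤ) = k}.encard =
          slotChoose ((slotSteps (v :: V) H).countP inward)
            ((slotSteps (v :: V) H).countP (!inward ·)) V.length k := by
      intro H hH k
      rw [ihV _ (fun s hs => hV s (List.mem_cons_of_mem v hs)) hH]
      rcases eq_or_ne V [] with rfl | hV0
      · simp only [List.length_nil, slotChoose_zero]
      · rw [countP_slotSteps_cons_left _ hV0, countP_slotSteps_cons_left _ hV0]
    induction H generalizing b k with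
    | nil =>
      rw [encard_setOf_isShuffle_cons_nil _ hv, vertical hH, List.length_cons, slotChoose_succ,
        slotChoose_eq_zero (n := V.length + 1) ?_ k, add_zero]
      rw [countP_inward_add_countP_not_inward]
      simp [slotSteps]
    | cons h H ihH =>
      have hh := hH h List.mem_cons_self
      rw [encard_setOf_isShuffle_cons_cons _ hv hh, vertical hH,
        ihH _ (fun s hs => hH s (List.mem_cons_of_mem h hs)), List.length_cons,
        ← countP_slotSteps_cons_right, ← countP_slotSteps_cons_right, slotChoose_succ,
        Nat.cast_add]

theorem invert_enumeration_general (u d r l : ℕ) (V H : List Step)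
    (hV : ∀ s ∈ V, isVert s = true)
    (hVlast : V.getLast? = some Step.S)
    (hVu : V.count Step.N = u) (hVd : V.count Step.S = d)
    (hH : ∀ s ∈ H, isHoriz s = true)
    (hHr : H.count Step.E = r) (hHl : H.count Step.W = l)
    (k : ℕ) :
    {σ : List Step | IsShuffle V H σ ∧ invert σ = k}.ncard
      = zch ((r : ℤ) + u) ((u : ℤ) + d - k) * zch ((l : ℤ) + d) (k : ℤ) := by
  have hin := countP_inward_slotSteps_add_one hV hH hVlast
  have hout := countP_not_inward_slotSteps hV hH hVlast
  have hlen : V.length = V.count N + V.count S := by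
    rw [← countP_inward_add_countP_not_inward, countP_inward_of_isVert hV,
      countP_not_inward_of_isVert hV, add_comm]
  have hset : {σ | IsShuffle V H σ ∧ invert σ = k} =
      {σ | IsShuffle V H σ ∧ (invertFrom true σ : ℤ) = k} := by
    simp only [invert_eq_invertFrom, Nat.cast_inj]
  rw [hset, Set.ncard_def, encard_setOf_isShuffle_invertFrom true hV hH, ENat.toNat_natCast,
    slotChoose, Bool.toNat_true, Bool.not_true, Bool.toNat_false, add_zero, hin, hout, hlen,
    hVu, hVd, hHr, hHl]
  push_cast
  rfl

/-- **Proposition (In-Vert enumeration).**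
If `V` is a nonempty vertical path with `u` North and `d` South steps ending in `S`, and
`H` is a horizontal path with `r` East and `l` West steps, then for every natural number
`k` the number of shuffles of `V` and `H` with In-Vert `k` is `C(r+u, u+d−k) · C(l+d, k)`. -/
theorem invert_enumeration (u d r l : ℕ) (V H : List Step)
    (hV : ∀ s ∈ V, isVert s = true) (hVne : V ≠ [])
    (hVlast : V.getLast? = some Step.S)
    (hVu : V.count Step.N = u) (hVd : V.count Step.S = d)
    (hH : ∀ s ∈ H, isHoriz s = true)
    (hHr : H.count Step.E = r) (hHl : H.count Step.W = l)
    (k : ℕ) :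
    {σ : List Step | IsShuffle V H σ ∧ invert σ = k}.ncard
      = zch ((r : ℤ) + u) ((u : ℤ) + d - k) * zch ((l : ℤ) + d) (k : ℤ) :=
  invert_enumeration_general u d r l V H hV hVlast hVu hVd hH hHr hHl k
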